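/- arXiv:1908.09030 — 4 statements merged into one kernel-verified Lean document; each statement's English description precedes it below -/
import Mathlib

section
/- Fix an integer k ≥ 2 and integers a, b, c with 0 ≤ a < b < c ≤ k. Let ρ_{a,b,c} be the polymatroid on the two-element set {e,f} with ρ(∅) = 0, ρ({e}) = b, ρ({f}) = c, and ρ({e,f}) = a + c. Then ρ_{a,b,c} is a k-polymatroid that is an excluded minor for the class Q_k of k-quotient polymatroids: ρ_{a,b,c} ∉ Q_k, but every minor of ρ_{a,b,c} obtained by deleting or contracting at least one element belongs to Q_k. -/
variable {α : Type*}

/-- `ρ` is an (integer) polymatroid on ground set `E`. -/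
def IsPolymatroidOn {β : Type*} [DecidableEq β] (E : Finset β) (ρ : Finset β → ℤ) : Prop :=
  ρ ∅ = 0 ∧
  (∀ A B : Finset β, A ⊆ B → B ⊆ E → ρ A ≤ ρ B) ∧
  (∀ A B : Finset β, A ⊆ E → B ⊆ E → ρ (A ∪ B) + ρ (A ∩ B) ≤ ρ A + ρ B)

/-- `r` is the rank function of a matroid on `E` (matroids are exactly the
`1`-polymatroids). -/
def IsMatroidRankOn {β : Type*} [DecidableEq β] (E : Finset β) (r : Finset β → ℤ) : Prop :=
  IsPolymatroidOn E r ∧ ∀ e ∈ E, r {e} ≤ 1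

/-- The matroid `Q` (rank function `rQ`) on `E` is a quotient of the matroid `L`
(rank function `rL`) on `E`: there are a matroid `N` on a ground set `E ∪ F` with
`F` disjoint from `E` (realized inside `α ⊕ ℕ`, which provides an unlimited supply
of fresh elements) such that `L = N∖F` and `Q = N/F`. -/
def IsQuotientOn [DecidableEq α] (E : Finset α) (rQ rL : Finset α → ℤ) : Prop :=
  ∃ (F : Finset (α ⊕ ℕ)) (rN : Finset (α ⊕ ℕ) → ℤ),
    Disjoint (E.map ⟨Sum.inl, Sum.inl_injective⟩) F ∧
    IsMatroidRankOn (E.map ⟨Sum.inl, Sum.inl_injective⟩ ∪ F) rN ∧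
    (∀ X ⊆ E, rL X = rN (X.map ⟨Sum.inl, Sum.inl_injective⟩)) ∧
    (∀ X ⊆ E, rQ X = rN (X.map ⟨Sum.inl, Sum.inl_injective⟩ ∪ F) - rN F)

/-- `ρ` belongs to the class `Q_k` of `k`-quotient polymatroids on `E`: it is a sum
of the rank functions of matroids `M_1, …, M_k` on `E` with each `M_{i+1}` a
quotient of `M_i`. -/
def MemQk [DecidableEq α] (k : ℕ) (E : Finset α) (ρ : Finset α → ℤ) : Prop :=
  ∃ M : Fin k → Finset α → ℤ,
    (∀ s, IsMatroidRankOn E (M s)) ∧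
    (∀ X ⊆ E, ρ X = ∑ s, M s X) ∧
    ∀ (s : Fin k) (h : (s : ℕ) + 1 < k), IsQuotientOn E (M ⟨(s : ℕ) + 1, h⟩) (M s)

/-- The polymatroid `ρ_{a,b,c}` on the two-element set `{e, f}`, taking values
`0`, `b`, `c`, `a+c` on `∅`, `{e}`, `{f}`, `{e,f}` respectively. -/
def rhoABC [DecidableEq α] (e f : α) (a b c : ℤ) : Finset α → ℤ :=
  fun A => if e ∈ A then (if f ∈ A then a + c else b) else (if f ∈ A then c else 0)

/-!
If `ρ = r₀ + ⋯ + r_{k-1}` with each `M_{i+1}` a quotient of `M_i`, then for `Y ⊆ X` the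
increments `r_i X - r_i Y` are non-increasing in `i` (submodularity in the matroid `N`
witnessing the quotient). For `X = insert x Y` they lie in `{0, 1}`, so they are forced:
`r_i X - r_i Y = 1` exactly when `i < ρ X - ρ Y`. For `ρ_{a,b,c}` the increment of `f` over
`{e}` is then `[i < a] + [i < c] - [i < b]`, which is `0` at `i = a` but `1` at `i = b > a`.

A proper minor lives on at most one element, and a polymatroid of rank `m ≤ k` on one element is
the sum of `m` copies of `U_{1,1}` and `k - m` copies of `U_{0,1}`, a chain of quotients.
-/
section Matroids

variable {β : Type*} [DecidableEq β]

def rankUnifOne (S : Finset β) : ℤ := if S.Nonempty then 1 else 0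

lemma isMatroidRankOn_zero (E : Finset β) : IsMatroidRankOn E 0 := by
  refine ⟨⟨rfl, ?_, ?_⟩, ?_⟩ <;> intros <;> simp

lemma isMatroidRankOn_rankUnifOne (E : Finset β) : IsMatroidRankOn E rankUnifOne := by
  refine ⟨⟨by simp [rankUnifOne], fun A B hAB _ => ?_, fun A B _ _ => ?_⟩,
    fun x _ => by simp [rankUnifOne]⟩
  · unfold rankUnifOne
    split_ifs with hA hB <;> first | omega | exact absurd (hA.mono hAB) hB
  · rcases A.eq_empty_or_nonempty with rfl | hA
    · rw [Finset.empty_union, Finset.empty_inter]; omega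
    rcases B.eq_empty_or_nonempty with rfl | hB
    · rw [Finset.union_empty, Finset.inter_empty]
    simp only [rankUnifOne, hA, hB, hA.mono Finset.subset_union_left, if_true]
    split_ifs <;> omega

lemma IsMatroidRankOn.insert_sub_mem_Icc {E : Finset β} {r : Finset β → ℤ}
    (hr : IsMatroidRankOn E r) {x : β} {Y : Finset β} (hx : x ∈ E) (hY : Y ⊆ E) :
    r (insert x Y) - r Y ∈ Set.Icc 0 1 := by
  obtain ⟨⟨h0, hmono, hsub⟩, hone⟩ := hr
  have hxE : {x} ⊆ E := Finset.singleton_subset_iff.mpr hx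
  have hsubxY := hsub {x} Y hxE hY
  have hinter := hmono ∅ ({x} ∩ Y) (Finset.empty_subset _) (Finset.inter_subset_left.trans hxE)
  have hmonoxY := hmono Y (insert x Y) (Finset.subset_insert x Y) (Finset.insert_subset hx hY)
  have hx1 := hone x hx
  rw [← Finset.insert_eq] at hsubxY
  constructor <;> omega

end Matroids

section Quotients

variable [DecidableEq α]

lemma IsQuotientOn.sub_le_sub {E : Finset α} {rQ rL : Finset α → ℤ}
    (h : IsQuotientOn E rQ rL) {X Y : Finset α} (hYX : Y ⊆ X) (hXE : X ⊆ E) :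
    rQ X - rQ Y ≤ rL X - rL Y := by
  obtain ⟨F, rN, hdisj, hN, hL, hQ⟩ := h
  set ι : α ↪ α ⊕ ℕ := ⟨Sum.inl, Sum.inl_injective⟩
  have hXι : X.map ι ⊆ E.map ι := Finset.map_subset_map.mpr hXE
  have hYιX : Y.map ι ⊆ X.map ι := Finset.map_subset_map.mpr hYX
  have hsub := hN.1.2.2 (X.map ι) (Y.map ι ∪ F) (hXι.trans Finset.subset_union_left)
    (Finset.union_subset_union (hYιX.trans hXι) le_rfl)
  have hunion : X.map ι ∪ (Y.map ι ∪ F) = X.map ι ∪ F := by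
    rw [← Finset.union_assoc, Finset.union_eq_left.mpr hYιX]
  have hinter : X.map ι ∩ (Y.map ι ∪ F) = Y.map ι := by
    rw [Finset.inter_union_distrib_left, Finset.inter_eq_right.mpr hYιX,
      Finset.disjoint_iff_inter_eq_empty.mp (hdisj.mono_left hXι), Finset.union_empty]
  rw [hunion, hinter] at hsub
  rw [hL X hXE, hL Y (hYX.trans hXE), hQ X hXE, hQ Y (hYX.trans hXE)]
  linarith

lemma isQuotientOn_zero_zero (E : Finset α) : IsQuotientOn E 0 0 :=
  ⟨∅, 0, by simp, isMatroidRankOn_zero _, by simp, by simp⟩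

lemma isQuotientOn_rankUnifOne_rankUnifOne (E : Finset α) :
    IsQuotientOn E rankUnifOne rankUnifOne :=
  ⟨∅, rankUnifOne, by simp, isMatroidRankOn_rankUnifOne _, by simp [rankUnifOne],
    by simp [rankUnifOne]⟩

lemma isQuotientOn_zero_rankUnifOne (E : Finset α) : IsQuotientOn E 0 rankUnifOne :=
  ⟨{Sum.inr 0}, rankUnifOne, by simp, isMatroidRankOn_rankUnifOne _, by simp [rankUnifOne],
    by simp [rankUnifOne]⟩

end Quotients

lemma sum_fin_ite_lt {k : ℕ} {m : ℤ} (h0 : 0 ≤ m) (hk : m ≤ k) :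
    ∑ s : Fin k, (if ((s : ℕ) : ℤ) < m then (1 : ℤ) else 0) = m := by
  rw [Fin.sum_univ_eq_sum_range (fun n => if (n : ℤ) < m then (1 : ℤ) else 0),
    ← Finset.sum_filter]
  have hfilter : (Finset.range k).filter (fun n : ℕ => (n : ℤ) < m) = Finset.range m.toNat := by
    ext n; simp only [Finset.mem_filter, Finset.mem_range]; omega
  rw [hfilter, Finset.sum_const, Finset.card_range, nsmul_one]
  omega

lemma eq_ite_lt_sum_of_antitone {k : ℕ} {v : Fin k → ℤ} (hv : Antitone v)
    (h0 : ∀ i, 0 ≤ v i) (h1 : ∀ i, v i ≤ 1) (j : Fin k) :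
    v j = if ((j : ℕ) : ℤ) < ∑ i, v i then 1 else 0 := by
  rcases (show v j = 0 ∨ v j = 1 by have := h0 j; have := h1 j; omega) with hj | hj
  · have hsum : ∑ i, v i ≤ ∑ i, if i < j then (1 : ℤ) else 0 :=
      Finset.sum_le_sum fun i _ => by
        split_ifs with hij
        · exact h1 i
        · exact (hv (not_lt.mp hij)).trans hj.le
    rw [Finset.sum_boole, Finset.filter_gt_eq_Iio, Fin.card_Iio] at hsum
    rw [hj, if_neg (by omega)]
  · have hsum : ∑ i, (if i ≤ j then (1 : ℤ) else 0) ≤ ∑ i, v i :=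
      Finset.sum_le_sum fun i _ => by
        split_ifs with hij
        · exact hj.ge.trans (hv hij)
        · exact h0 i
    rw [Finset.sum_boole, Finset.filter_ge_eq_Iic, Fin.card_Iic] at hsum
    rw [hj, if_pos (by push_cast at hsum; omega)]

section QuotientChain

variable [DecidableEq α] {k : ℕ} {E : Finset α} {M : Fin k → Finset α → ℤ}

lemma antitone_sub_of_isQuotientOn
    (hq : ∀ (s : Fin k) (h : (s : ℕ) + 1 < k), IsQuotientOn E (M ⟨(s : ℕ) + 1, h⟩) (M s))
    {X Y : Finset α} (hYX : Y ⊆ X) (hXE : X ⊆ E) :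
    Antitone fun s => M s X - M s Y := by
  cases k with
  | zero => exact fun i => i.elim0
  | succ n =>
    rw [Fin.antitone_iff_succ_le]
    exact fun i => (hq i.castSucc (by simp)).sub_le_sub hYX hXE

lemma insert_sub_eq_ite_of_isQuotientOn (hM : ∀ s, IsMatroidRankOn E (M s))
    (hq : ∀ (s : Fin k) (h : (s : ℕ) + 1 < k), IsQuotientOn E (M ⟨(s : ℕ) + 1, h⟩) (M s))
    {x : α} {Y : Finset α} (hx : x ∈ E) (hY : Y ⊆ E) (s : Fin k) :
    M s (insert x Y) - M s Y =
      if ((s : ℕ) : ℤ) < ∑ t, (M t (insert x Y) - M t Y) then 1 else 0 :=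
  eq_ite_lt_sum_of_antitone
    (antitone_sub_of_isQuotientOn hq (Finset.subset_insert x Y) (Finset.insert_subset hx hY))
    (fun t => ((hM t).insert_sub_mem_Icc hx hY).1)
    (fun t => ((hM t).insert_sub_mem_Icc hx hY).2) s

end QuotientChain

lemma memQk_of_card_le_one [DecidableEq α] {k : ℕ} {G : Finset α} {ρ : Finset α → ℤ}
    (hG : G.card ≤ 1) (h0 : ρ ∅ = 0) (hρ0 : 0 ≤ ρ G) (hρk : ρ G ≤ k) : MemQk k G ρ := by
  refine ⟨fun s => if ((s : ℕ) : ℤ) < ρ G then rankUnifOne else 0, fun s => ?_, fun X hX => ?_,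
    fun s h => ?_⟩
  · dsimp only
    split_ifs
    exacts [isMatroidRankOn_rankUnifOne G, isMatroidRankOn_zero G]
  · rcases X.eq_empty_or_nonempty with rfl | hX0
    · rw [h0]
      exact (Finset.sum_eq_zero fun s _ => by dsimp only; split_ifs <;> simp [rankUnifOne]).symm
    · obtain rfl : X = G := Finset.eq_of_subset_of_card_le hX (hG.trans hX0.card_pos)
      simp only [apply_ite (fun r : Finset α → ℤ => r X), rankUnifOne, hX0, if_true, Pi.zero_apply]
      exact (sum_fin_ite_lt hρ0 hρk).symm
  · dsimp only
    split_ifs with h1 h2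
    · exact isQuotientOn_rankUnifOne_rankUnifOne G
    · omega
    · exact isQuotientOn_zero_rankUnifOne G
    · exact isQuotientOn_zero_zero G

lemma memQk_contract_of_card_le_one [DecidableEq α] {k : ℕ} {E B G : Finset α}
    {ρ : Finset α → ℤ} (hρ : IsPolymatroidOn E ρ) (hρk : ∀ x ∈ E, ρ {x} ≤ k) (hB : B ⊆ E)
    (hG : G ⊆ E \ B) (hcard : G.card ≤ 1) : MemQk k G (fun X => ρ (X ∪ B) - ρ B) := by
  obtain ⟨h0, hmono, hsub⟩ := hρ
  have hGE : G ⊆ E := hG.trans Finset.sdiff_subset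
  have hGB : G ∩ B = ∅ :=
    Finset.disjoint_iff_inter_eq_empty.mp (Finset.disjoint_of_subset_left hG Finset.sdiff_disjoint)
  have hρG : ρ G ≤ k := by
    rcases G.eq_empty_or_nonempty with rfl | ⟨x, hx⟩
    · rw [h0]; omega
    · obtain rfl : G = {x} := Finset.eq_singleton_iff_unique_mem.mpr
        ⟨hx, fun y hy => Finset.card_le_one.mp hcard y hy x hx⟩
      exact hρk x (hGE hx)
  have hmonoGB := hmono B (G ∪ B) Finset.subset_union_right (Finset.union_subset hGE hB)
  have hsubGB := hsub G B hGE hB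
  rw [hGB, h0] at hsubGB
  exact memQk_of_card_le_one hcard (by simp) (by linarith) (by linarith)

section RhoABC

variable [DecidableEq α] {e f : α} {a b c : ℤ}

lemma isPolymatroidOn_rhoABC (ha : 0 ≤ a) (hab : a ≤ b) (hbc : b ≤ a + c) :
    IsPolymatroidOn {e, f} (rhoABC e f a b c) := by
  refine ⟨by simp [rhoABC], fun A B hAB _ => ?_, fun A B _ _ => ?_⟩
  · have heAB := @hAB e
    have hfAB := @hAB f
    by_cases h1 : e ∈ A <;> by_cases h2 : f ∈ A <;> by_cases h3 : e ∈ B <;> by_cases h4 : f ∈ B <;>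
      simp_all [rhoABC] <;> omega
  · by_cases h1 : e ∈ A <;> by_cases h2 : f ∈ A <;> by_cases h3 : e ∈ B <;> by_cases h4 : f ∈ B <;>
      simp [rhoABC, h1, h2, h3, h4] <;> omega

lemma not_memQk_rhoABC {k : ℕ} (ha : 0 ≤ a) (hab : a < b) (hbc : b < c) (hck : c ≤ k)
    (hef : e ≠ f) : ¬ MemQk k {e, f} (rhoABC e f a b c) := by
  rintro ⟨M, hM, hsum, hq⟩
  have hincr : ∀ x ∈ ({e, f} : Finset α), ∀ Y ⊆ ({e, f} : Finset α), ∀ s,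
      M s (insert x Y) - M s Y =
        if ((s : ℕ) : ℤ) < rhoABC e f a b c (insert x Y) - rhoABC e f a b c Y then 1 else 0 := by
    intro x hx Y hY s
    rw [insert_sub_eq_ite_of_isQuotientOn hM hq hx hY s, Finset.sum_sub_distrib,
      ← hsum _ (Finset.insert_subset hx hY), ← hsum Y hY]
  have he := hincr e (by simp) ∅ (by simp)
  have hf := hincr f (by simp) ∅ (by simp)
  have hef_incr := hincr e (by simp) {f} (by simp)
  simp only [rhoABC, insert_empty_eq, Finset.mem_insert, Finset.mem_singleton,
    Finset.notMem_empty, hef, hef.symm, or_false, or_true, if_true, if_false,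
    sub_zero, add_sub_cancel_right] at he hf hef_incr
  let i : Fin k := ⟨a.toNat, by omega⟩
  let j : Fin k := ⟨b.toNat, by omega⟩
  have hanti := antitone_sub_of_isQuotientOn hq (X := {e, f}) (Y := {e}) (by simp) le_rfl
    (show i ≤ j from Fin.mk_le_mk.mpr (by omega))
  have hi : ((i : ℕ) : ℤ) = a := Int.toNat_of_nonneg ha
  have hj : ((j : ℕ) : ℤ) = b := Int.toNat_of_nonneg (ha.trans hab.le)
  have hei := he i
  have hfi := hf i
  have hefi := hef_incr i
  have hej := he j
  have hfj := hf j
  have hefj := hef_incr j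
  rw [hi] at hei hfi hefi
  rw [hj] at hej hfj hefj
  simp only [hab, hbc, hab.trans hbc, lt_irrefl, not_lt.mpr hab.le, if_true, if_false]
    at hei hfi hefi hej hfj hefj
  dsimp only at hanti
  omega

end RhoABC

theorem stmt15_general [DecidableEq α] (k : ℕ)
    (a b c : ℤ) (ha : 0 ≤ a) (hab : a < b) (hbc : b < c) (hck : c ≤ (k : ℤ))
    (e f : α) (hef : e ≠ f) :
    IsPolymatroidOn ({e, f} : Finset α) (rhoABC e f a b c) ∧
    (∀ x ∈ ({e, f} : Finset α), rhoABC e f a b c {x} ≤ (k : ℤ)) ∧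
    ¬ MemQk k ({e, f} : Finset α) (rhoABC e f a b c) ∧
    (∀ A B : Finset α, A ⊆ ({e, f} : Finset α) → B ⊆ ({e, f} : Finset α) →
      Disjoint A B → (A ∪ B).Nonempty →
      MemQk k (({e, f} : Finset α) \ (A ∪ B))
        (fun X => rhoABC e f a b c (X ∪ B) - rhoABC e f a b c B)) := by
  have hpoly : IsPolymatroidOn {e, f} (rhoABC e f a b c) :=
    isPolymatroidOn_rhoABC ha hab.le (by omega)
  have hbound : ∀ x ∈ ({e, f} : Finset α), rhoABC e f a b c {x} ≤ k := by
    simp only [Finset.mem_insert, Finset.mem_singleton, forall_eq_or_imp, forall_eq]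
    simp only [rhoABC, Finset.mem_singleton, hef, hef.symm, if_true, if_false]
    omega
  refine ⟨hpoly, hbound, not_memQk_rhoABC ha hab hbc hck hef, fun A B hA hB _ hAB => ?_⟩
  refine memQk_contract_of_card_le_one hpoly hbound hB
    (Finset.sdiff_subset_sdiff le_rfl Finset.subset_union_right) ?_
  rw [Finset.card_sdiff_of_subset (Finset.union_subset hA hB)]
  have hAB_pos := hAB.card_pos
  have hef_card := Finset.card_le_two (a := e) (b := f)
  omega

theorem stmt15 [DecidableEq α] (k : ℕ) (hk : 2 ≤ k)
    (a b c : ℤ) (ha : 0 ≤ a) (hab : a < b) (hbc : b < c) (hck : c ≤ (k : ℤ))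
    (e f : α) (hef : e ≠ f) :
    IsPolymatroidOn ({e, f} : Finset α) (rhoABC e f a b c) ∧
    (∀ x ∈ ({e, f} : Finset α), rhoABC e f a b c {x} ≤ (k : ℤ)) ∧
    ¬ MemQk k ({e, f} : Finset α) (rhoABC e f a b c) ∧
    (∀ A B : Finset α, A ⊆ ({e, f} : Finset α) → B ⊆ ({e, f} : Finset α) →
      Disjoint A B → (A ∪ B).Nonempty →
      MemQk k (({e, f} : Finset α) \ (A ∪ B))
        (fun X => rhoABC e f a b c (X ∪ B) - rhoABC e f a b c B)) :=
  stmt15_general k a b c ha hab hbc hck e f hef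
end

section
/- Fix an integer k ≥ 2. Let ρ be a k-polymatroid on a finite set E that has no minor isomorphic to ρ_{a,b,c} for any integers 0 ≤ a < b < c ≤ k, where ρ_{a,b,c} is the polymatroid on a two-element set {e,f} with values 0, b, c, a+c on ∅, {e}, {f}, {e,f} respectively, and a minor of ρ on a two-element set is isomorphic to ρ_{a,b,c} if it equals ρ_{a,b,c} after some bijection of its ground set with {e,f}. Then ρ belongs to Q_k: there are matroids M_1,…,M_k on E with ρ(X) = r_{M_1}(X)+⋯+r_{M_k}(X) for all X ⊆ E and with M_{i+1} a quotient of M_i for each i ∈ {1,…,k−1}. -/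
variable {α : Type*}

/-!
Write `∂ρ(x | B) = ρ(B ∪ x) - ρ(B)` and let `r_j(X)` count the elements `xᵢ` of an ordering
`x₁, …, xₙ` of `X` with `∂ρ(xᵢ | {xᵢ₊₁, …, xₙ}) ≥ j`; since every marginal lies in `[0, k]`,
`ρ = r_1 + ⋯ + r_k`. Excluding the minors `ρ_{a,b,c}` says exactly that `∂ρ(x | B) < ∂ρ(y | B)`
forces `∂ρ(x | B ∪ y) = ∂ρ(x | B)`, so swapping two adjacent elements of the ordering permutes
their two marginals and `r_j` does not depend on the ordering. The marginals of `r_j` are the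
indicators of `∂ρ(x | X) ≥ j`, which are `0/1`-valued and antitone in `X`, so `r_j` is a matroid
rank function; those of `r_{j+1}` are bounded by those of `r_j`, and the Higgs lift (adjoining
`r_j(E) - r_{j+1}(E)` free elements) then exhibits `r_{j+1}` as a quotient of `r_j`.
-/

open Finset

section Marginal

variable {β : Type*} [DecidableEq β] {E : Finset β} {ρ : Finset β → ℤ}

def marginal (ρ : Finset β → ℤ) (x : β) (B : Finset β) : ℤ := ρ (insert x B) - ρ B

theorem marginal_insert_add_marginal (ρ : Finset β → ℤ) (x y : β) (B : Finset β) :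
    marginal ρ x (insert y B) + marginal ρ y B = marginal ρ y (insert x B) + marginal ρ x B := by
  simp only [marginal, insert_comm x y B]
  ring

theorem sub_le_sub_of_marginal_le {f g : Finset β → ℤ}
    (h : ∀ x X Y, X ⊆ Y → x ∉ Y → insert x Y ⊆ E → marginal g x Y ≤ marginal f x X)
    {X Y : Finset β} (hXY : X ⊆ Y) (D : Finset β) (hD : Disjoint D Y) (hE : Y ∪ D ⊆ E) :
    g (Y ∪ D) - g Y ≤ f (X ∪ D) - f X := by
  induction D using Finset.induction_on with
  | empty => simp
  | insert d D hd ih =>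
    simp only [union_insert] at hE ⊢
    have hdY : d ∉ Y ∪ D := by
      simpa [hd] using disjoint_left.1 hD (mem_insert_self d D)
    have hstep := h d (X ∪ D) (Y ∪ D) (union_subset_union hXY subset_rfl) hdY hE
    have hrest := ih (disjoint_of_subset_left (subset_insert d D) hD)
      ((subset_insert _ _).trans hE)
    simp only [marginal] at hstep
    linarith

theorem isPolymatroidOn_of_marginal {f : Finset β → ℤ} (h0 : f ∅ = 0)
    (hnonneg : ∀ x X, x ∉ X → insert x X ⊆ E → 0 ≤ marginal f x X)
    (hanti : ∀ x X Y, X ⊆ Y → x ∉ Y → insert x Y ⊆ E → marginal f x Y ≤ marginal f x X) :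
    IsPolymatroidOn E f := by
  refine ⟨h0, fun A B hAB hB => ?_, fun A B hA hB => ?_⟩
  · have := sub_le_sub_of_marginal_le (f := f) (g := fun _ => 0)
      (fun x X Y hXY hx h => by
        simpa [marginal] using
          hnonneg x X (fun hxX => hx (hXY hxX)) ((insert_subset_insert x hXY).trans h))
      subset_rfl (B \ A) sdiff_disjoint (by rwa [union_sdiff_of_subset hAB])
    rw [union_sdiff_of_subset hAB] at this
    linarith
  · have := sub_le_sub_of_marginal_le hanti (inter_subset_right (s₁ := A)) (A \ B)
      sdiff_disjoint (by rw [union_sdiff_self_eq_union]; exact union_subset hB hA)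
    rw [union_sdiff_self_eq_union, union_comm (A ∩ B), sdiff_union_inter, union_comm B] at this
    linarith

theorem isPolymatroidOn_card (E : Finset β) : IsPolymatroidOn E (fun S => (#S : ℤ)) :=
  ⟨by simp, fun _ _ hAB _ => by dsimp only; exact_mod_cast card_le_card hAB,
    fun A B _ _ => by dsimp only; exact_mod_cast (card_union_add_card_inter A B).le⟩

namespace IsPolymatroidOn

theorem marginal_nonneg (hρ : IsPolymatroidOn E ρ) {x : β} {B : Finset β}
    (h : insert x B ⊆ E) : 0 ≤ marginal ρ x B :=
  sub_nonneg.2 (hρ.2.1 _ _ (subset_insert x B) h)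

theorem marginal_anti (hρ : IsPolymatroidOn E ρ) {x : β} {B B' : Finset β}
    (hBB' : B ⊆ B') (hx : x ∉ B') (h : insert x B' ⊆ E) :
    marginal ρ x B' ≤ marginal ρ x B := by
  have := hρ.2.2 (insert x B) B' ((insert_subset_insert x hBB').trans h)
    ((subset_insert x B').trans h)
  rw [insert_union, union_eq_right.2 hBB', insert_inter_of_notMem hx,
    inter_eq_left.2 hBB'] at this
  simp only [marginal]
  linarith

theorem marginal_le_singleton (hρ : IsPolymatroidOn E ρ) {x : β} {B : Finset β}
    (hx : x ∉ B) (h : insert x B ⊆ E) : marginal ρ x B ≤ ρ {x} := by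
  simpa [marginal, hρ.1] using hρ.marginal_anti (empty_subset B) hx h

theorem add {f g : Finset β → ℤ} (hf : IsPolymatroidOn E f) (hg : IsPolymatroidOn E g) :
    IsPolymatroidOn E (f + g) := by
  refine ⟨by simp [hf.1, hg.1], fun A B hAB hB => ?_, fun A B hA hB => ?_⟩
  · simpa using add_le_add (hf.2.1 A B hAB hB) (hg.2.1 A B hAB hB)
  · have := add_le_add (hf.2.2 A B hA hB) (hg.2.2 A B hA hB)
    simp only [Pi.add_apply]
    linarith

theorem comp {γ : Type*} [DecidableEq γ] {G : Finset γ} {φ : Finset γ → Finset β}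
    (hρ : IsPolymatroidOn E ρ) (hφG : ∀ S ⊆ G, φ S ⊆ E) (hφ0 : φ ∅ = ∅)
    (hφ_union : ∀ S T, φ (S ∪ T) = φ S ∪ φ T) (hφ_inter : ∀ S T, φ (S ∩ T) = φ S ∩ φ T) :
    IsPolymatroidOn G (ρ ∘ φ) := by
  refine ⟨by simp [hφ0, hρ.1], fun S T hST hT => ?_, fun S T hS hT => ?_⟩
  · refine hρ.2.1 _ _ ?_ (hφG T hT)
    rw [← union_eq_right.2 hST, hφ_union]
    exact subset_union_left
  · simpa [hφ_union, hφ_inter] using hρ.2.2 _ _ (hφG S hS) (hφG T hT)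

theorem min_add_const {f g : Finset β → ℤ} {d : ℤ} (hf : IsPolymatroidOn E f)
    (hg : IsPolymatroidOn E g) (hd : 0 ≤ d)
    (hfg : ∀ A B, A ⊆ B → B ⊆ E → g B - g A ≤ f B - f A) :
    IsPolymatroidOn E (fun S => min (f S) (g S + d)) := by
  refine ⟨by simp [hf.1, hg.1, hd], fun A B hAB hB => ?_, fun A B hA hB => ?_⟩
  · exact min_le_min (hf.2.1 A B hAB hB) (by linarith [hg.2.1 A B hAB hB])
  have hfAB := hf.2.2 A B hA hB
  have hgAB := hg.2.2 A B hA hB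
  -- in the mixed cases, e.g. `g (A ∪ B) - g B ≤ g A - g (A ∩ B) ≤ f A - f (A ∩ B)`
  have hfgA := hfg (A ∩ B) A inter_subset_left hA
  have hfgB := hfg (A ∩ B) B inter_subset_right hB
  have := min_le_left (f (A ∪ B)) (g (A ∪ B) + d)
  have := min_le_right (f (A ∪ B)) (g (A ∪ B) + d)
  have := min_le_left (f (A ∩ B)) (g (A ∩ B) + d)
  have := min_le_right (f (A ∩ B)) (g (A ∩ B) + d)
  rcases min_cases (f A) (g A + d) with hA' | hA' <;>
    rcases min_cases (f B) (g B + d) with hB' | hB' <;>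
    linarith

end IsPolymatroidOn

end Marginal

section HiggsLift

variable {β : Type*} [DecidableEq β]

def higgsLift (rL rQ : Finset β → ℤ) (d : ℤ) (S : Finset (β ⊕ ℕ)) : ℤ :=
  min (rL S.toLeft + #S.toRight) (rQ S.toLeft + d)

variable {E : Finset β} {G : Finset (β ⊕ ℕ)} {rL rQ : Finset β → ℤ} {d : ℤ}

theorem isMatroidRankOn_higgsLift (hG : G.toLeft ⊆ E) (hL : IsMatroidRankOn E rL)
    (hQ : IsPolymatroidOn E rQ) (hd : 0 ≤ d)
    (hq : ∀ X Y, X ⊆ Y → Y ⊆ E → rQ Y - rQ X ≤ rL Y - rL X) :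
    IsMatroidRankOn G (higgsLift rL rQ d) := by
  have hGE : ∀ S ⊆ G, S.toLeft ⊆ E := fun S hS => (toLeft_subset_toLeft hS).trans hG
  have toLeft_empty : (∅ : Finset (β ⊕ ℕ)).toLeft = ∅ := by ext; simp
  have toRight_empty : (∅ : Finset (β ⊕ ℕ)).toRight = ∅ := by ext; simp
  refine ⟨IsPolymatroidOn.min_add_const
    ((hL.1.comp hGE toLeft_empty (fun _ _ => toLeft_union) (fun _ _ => toLeft_inter)).add
      ((isPolymatroidOn_card G.toRight).comp (fun S hS => toRight_subset_toRight hS)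
        toRight_empty (fun _ _ => toRight_union) (fun _ _ => toRight_inter)))
    (hQ.comp hGE toLeft_empty (fun _ _ => toLeft_union) (fun _ _ => toLeft_inter)) hd
    fun S T hST hT => ?_, fun e he => ?_⟩
  · have := hq _ _ (toLeft_subset_toLeft hST) (hGE T hT)
    have : #S.toRight ≤ #T.toRight := card_le_card (toRight_subset_toRight hST)
    omega
  rcases e with a | n
  · have hleft : ({Sum.inl a} : Finset (β ⊕ ℕ)).toLeft = {a} := by ext; simp
    have hright : ({Sum.inl a} : Finset (β ⊕ ℕ)).toRight = ∅ := by ext; simp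
    have := hL.2 a (hG (mem_toLeft.2 he))
    simp only [higgsLift, hleft, hright, card_empty]
    omega
  · have hleft : ({Sum.inr n} : Finset (β ⊕ ℕ)).toLeft = ∅ := by ext; simp
    have hright : ({Sum.inr n} : Finset (β ⊕ ℕ)).toRight = {n} := by ext; simp
    simp only [higgsLift, hleft, hright, hL.1.1, card_singleton]
    omega

theorem isQuotientOn_of_sub_le (hL : IsMatroidRankOn E rL) (hQ : IsPolymatroidOn E rQ)
    (hq : ∀ X Y, X ⊆ Y → Y ⊆ E → rQ Y - rQ X ≤ rL Y - rL X) :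
    IsQuotientOn E rQ rL := by
  set d := rL E - rQ E
  have hd : 0 ≤ d := by
    have := hq ∅ E (empty_subset E) subset_rfl
    rw [hL.1.1, hQ.1] at this
    omega
  set F : Finset (β ⊕ ℕ) := (range d.toNat).map ⟨Sum.inr, Sum.inr_injective⟩
  have hFleft : F.toLeft = ∅ := by ext; simp [F]
  have hFright : F.toRight = range d.toNat := by ext; simp [F]
  refine ⟨F, higgsLift rL rQ d, disjoint_map_inl_map_inr E _,
    isMatroidRankOn_higgsLift (fun a => by simp [F]) hL hQ hd hq,
    fun X hX => ?_, fun X hX => ?_⟩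
  · have hleft : (X.map ⟨Sum.inl, Sum.inl_injective⟩ : Finset (β ⊕ ℕ)).toLeft = X := by
      ext; simp
    have hright : (X.map ⟨Sum.inl, Sum.inl_injective⟩ : Finset (β ⊕ ℕ)).toRight = ∅ := by
      ext; simp
    have := hq X E hX subset_rfl
    simp only [higgsLift, hleft, hright, card_empty]
    omega
  · have hleft : (X.map ⟨Sum.inl, Sum.inl_injective⟩ ∪ F).toLeft = X := by ext; simp [F]
    have hright : (X.map ⟨Sum.inl, Sum.inl_injective⟩ ∪ F).toRight = range d.toNat := by
      ext; simp [F]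
    have := hq ∅ X (empty_subset X) hX
    rw [hL.1.1, hQ.1] at this
    simp only [higgsLift, hleft, hright, hFleft, hFright, card_range, hL.1.1, hQ.1,
      Int.toNat_of_nonneg hd]
    omega

end HiggsLift

section ExcludedMinor

variable {β : Type*} [DecidableEq β] {k : ℕ} {E : Finset β} {ρ : Finset β → ℤ}

/-- `(ρ ∖ A) / B`, on the remaining pair `x, y`, is never `ρ_{a,b,c}` with `(e, f) = (x, y)`. -/
def NoRhoABCMinor (k : ℕ) (E : Finset β) (ρ : Finset β → ℤ) : Prop :=
  ¬ ∃ (A B : Finset β) (x y : β) (a b c : ℤ),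
      A ⊆ E ∧ B ⊆ E ∧ Disjoint A B ∧ E \ (A ∪ B) = {x, y} ∧ x ≠ y ∧
      0 ≤ a ∧ a < b ∧ b < c ∧ c ≤ (k : ℤ) ∧
      ρ ({x} ∪ B) - ρ B = b ∧ ρ ({y} ∪ B) - ρ B = c ∧
      ρ ({x, y} ∪ B) - ρ B = a + c

def layerCount (ρ : Finset β → ℤ) (j : ℤ) : List β → ℤ
  | [] => 0
  | x :: l => layerCount ρ j l + if j ≤ marginal ρ x l.toFinset then 1 else 0

noncomputable def layerRank (ρ : Finset β → ℤ) (j : ℤ) (X : Finset β) : ℤ :=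
  layerCount ρ j X.toList

theorem layerRank_empty (ρ : Finset β → ℤ) (j : ℤ) : layerRank ρ j ∅ = 0 := by
  simp [layerRank, layerCount]

theorem sum_fin_ite_add_one_le {k : ℕ} {c : ℤ} (h0 : 0 ≤ c) (hk : c ≤ k) :
    ∑ s : Fin k, (if ((s : ℕ) : ℤ) + 1 ≤ c then 1 else 0 : ℤ) = c := by
  rw [sum_boole, filter_congr (q := fun s : Fin k => (s : ℕ) < c.toNat) (fun s _ => by omega),
    Fin.card_filter_val_lt]
  omega

namespace NoRhoABCMinor

theorem marginal_insert_eq_of_lt (hmin : NoRhoABCMinor k E ρ) (hρ : IsPolymatroidOn E ρ)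
    (hk : ∀ x ∈ E, ρ {x} ≤ k) {x y : β} {B : Finset β} (hxy : x ≠ y) (hx : x ∈ E)
    (hy : y ∈ E) (hB : B ⊆ E) (hxB : x ∉ B) (hyB : y ∉ B)
    (hlt : marginal ρ x B < marginal ρ y B) :
    marginal ρ x (insert y B) = marginal ρ x B := by
  have hyBE : insert y B ⊆ E := insert_subset hy hB
  have hxyBE : insert x (insert y B) ⊆ E := insert_subset hx hyBE
  have hx_yB : x ∉ insert y B := by simp [hxy, hxB]
  refine le_antisymm (hρ.marginal_anti (subset_insert y B) hx_yB hxyBE)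
    (not_lt.1 fun hdrop => hmin ?_)
  have hrest : E \ (E \ insert x (insert y B) ∪ B) = {x, y} := by
    ext z
    simp only [mem_sdiff, mem_union, mem_insert, mem_singleton]
    have := @hB z
    grind
  refine ⟨E \ insert x (insert y B), B, x, y, marginal ρ x (insert y B), marginal ρ x B,
    marginal ρ y B, sdiff_subset, hB, ?_, hrest, hxy, hρ.marginal_nonneg hxyBE, hdrop, hlt,
    (hρ.marginal_le_singleton hyB hyBE).trans (hk y hy), by rw [← insert_eq]; rfl,
    by rw [← insert_eq]; rfl, ?_⟩
  · exact disjoint_sdiff_self_left.mono_right ((subset_insert _ _).trans (subset_insert _ _))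
  · rw [insert_union, ← insert_eq]
    simp only [marginal]
    ring

theorem indicator_marginal_comm (hmin : NoRhoABCMinor k E ρ) (hρ : IsPolymatroidOn E ρ)
    (hk : ∀ x ∈ E, ρ {x} ≤ k) {x y : β} {B : Finset β} (hxy : x ≠ y) (hx : x ∈ E)
    (hy : y ∈ E) (hB : B ⊆ E) (hxB : x ∉ B) (hyB : y ∉ B) (j : ℤ) :
    ((if j ≤ marginal ρ y B then 1 else 0) + if j ≤ marginal ρ x (insert y B) then 1 else 0 : ℤ) =
      (if j ≤ marginal ρ x B then 1 else 0) + if j ≤ marginal ρ y (insert x B) then 1 else 0 := by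
  have hswap := marginal_insert_add_marginal ρ x y B
  rcases lt_trichotomy (marginal ρ x B) (marginal ρ y B) with hlt | heq | hgt
  · rw [hmin.marginal_insert_eq_of_lt hρ hk hxy hx hy hB hxB hyB hlt,
      show marginal ρ y (insert x B) = marginal ρ y B by
        linarith [hmin.marginal_insert_eq_of_lt hρ hk hxy hx hy hB hxB hyB hlt]]
    ring
  · rw [heq, show marginal ρ x (insert y B) = marginal ρ y (insert x B) by linarith]
  · rw [hmin.marginal_insert_eq_of_lt hρ hk hxy.symm hy hx hB hyB hxB hgt,
      show marginal ρ x (insert y B) = marginal ρ x B by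
        linarith [hmin.marginal_insert_eq_of_lt hρ hk hxy.symm hy hx hB hyB hxB hgt]]
    ring

theorem layerCount_perm (hmin : NoRhoABCMinor k E ρ) (hρ : IsPolymatroidOn E ρ)
    (hk : ∀ x ∈ E, ρ {x} ≤ k) (j : ℤ) {l₁ l₂ : List β} (hperm : l₁.Perm l₂) (hnodup : l₁.Nodup)
    (hE : l₁.toFinset ⊆ E) : layerCount ρ j l₁ = layerCount ρ j l₂ := by
  induction hperm with
  | nil => rfl
  | cons x hperm ih =>
    simp only [List.nodup_cons, List.toFinset_cons, insert_subset_iff] at hnodup hE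
    simp only [layerCount, ih hnodup.2 hE.2, List.toFinset_eq_of_perm _ _ hperm]
  | swap x y l =>
    simp only [List.nodup_cons, List.mem_cons, not_or, List.toFinset_cons,
      insert_subset_iff] at hnodup hE
    have := hmin.indicator_marginal_comm hρ hk (Ne.symm hnodup.1.1) hE.2.1 hE.1 hE.2.2
      (by simpa using hnodup.2.1) (by simpa using hnodup.1.2) j
    simp only [layerCount, List.toFinset_cons]
    linarith
  | trans h₁₂ _ ih₁₂ ih₂₃ =>
    rw [ih₁₂ hnodup hE, ih₂₃ (h₁₂.nodup_iff.1 hnodup)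
      (by rwa [← List.toFinset_eq_of_perm _ _ h₁₂])]

theorem marginal_layerRank (hmin : NoRhoABCMinor k E ρ) (hρ : IsPolymatroidOn E ρ)
    (hk : ∀ x ∈ E, ρ {x} ≤ k) (j : ℤ) {x : β} {X : Finset β} (hx : x ∉ X)
    (hE : insert x X ⊆ E) :
    marginal (layerRank ρ j) x X = if j ≤ marginal ρ x X then 1 else 0 := by
  rw [marginal, layerRank, hmin.layerCount_perm hρ hk j (toList_insert hx) (nodup_toList _)
    (by simpa using hE)]
  simp [layerCount, layerRank]

theorem marginal_layerRank_le (hmin : NoRhoABCMinor k E ρ) (hρ : IsPolymatroidOn E ρ)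
    (hk : ∀ x ∈ E, ρ {x} ≤ k) {j j' : ℤ} (hjj' : j ≤ j') {x : β} {X Y : Finset β}
    (hXY : X ⊆ Y) (hx : x ∉ Y) (hE : insert x Y ⊆ E) :
    marginal (layerRank ρ j') x Y ≤ marginal (layerRank ρ j) x X := by
  rw [hmin.marginal_layerRank hρ hk j' hx hE, hmin.marginal_layerRank hρ hk j
    (fun hxX => hx (hXY hxX)) ((insert_subset_insert x hXY).trans hE)]
  have := hρ.marginal_anti hXY hx hE
  split_ifs <;> omega

theorem isMatroidRankOn_layerRank (hmin : NoRhoABCMinor k E ρ) (hρ : IsPolymatroidOn E ρ)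
    (hk : ∀ x ∈ E, ρ {x} ≤ k) (j : ℤ) : IsMatroidRankOn E (layerRank ρ j) := by
  refine ⟨isPolymatroidOn_of_marginal (layerRank_empty ρ j) (fun x X hx hE => ?_)
    (fun x X Y hXY hx hE => hmin.marginal_layerRank_le hρ hk le_rfl hXY hx hE),
    fun e he => ?_⟩
  · rw [hmin.marginal_layerRank hρ hk j hx hE]
    split_ifs <;> omega
  · have := hmin.marginal_layerRank hρ hk j (notMem_empty e) (by simpa using he)
    rw [marginal, insert_empty, layerRank_empty] at this
    split_ifs at this <;> omega

theorem layerRank_sub_le (hmin : NoRhoABCMinor k E ρ) (hρ : IsPolymatroidOn E ρ)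
    (hk : ∀ x ∈ E, ρ {x} ≤ k) {j j' : ℤ} (hjj' : j ≤ j') {X Y : Finset β} (hXY : X ⊆ Y)
    (hYE : Y ⊆ E) : layerRank ρ j' Y - layerRank ρ j' X ≤ layerRank ρ j Y - layerRank ρ j X := by
  have := sub_le_sub_of_marginal_le (fun _ _ _ hsub hx hE =>
    hmin.marginal_layerRank_le hρ hk hjj' hsub hx hE) subset_rfl (Y \ X) sdiff_disjoint
    (by rwa [union_sdiff_of_subset hXY])
  rwa [union_sdiff_of_subset hXY] at this

theorem sum_layerRank (hmin : NoRhoABCMinor k E ρ) (hρ : IsPolymatroidOn E ρ)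
    (hk : ∀ x ∈ E, ρ {x} ≤ k) {X : Finset β} (hX : X ⊆ E) :
    ∑ s : Fin k, layerRank ρ ((s : ℕ) + 1) X = ρ X := by
  induction X using Finset.induction_on with
  | empty => simp [layerRank_empty, hρ.1]
  | insert x X hx ih =>
    have hstep (s : Fin k) := hmin.marginal_layerRank hρ hk ((s : ℕ) + 1) hx hX
    have hxE := hX (mem_insert_self x X)
    calc ∑ s : Fin k, layerRank ρ ((s : ℕ) + 1) (insert x X)
        = ∑ s : Fin k, (layerRank ρ ((s : ℕ) + 1) X +
            if ((s : ℕ) : ℤ) + 1 ≤ marginal ρ x X then 1 else 0) :=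
          sum_congr rfl fun s _ => by rw [← hstep s, marginal]; ring
      _ = ρ X + marginal ρ x X := by
          rw [sum_add_distrib, ih ((subset_insert x X).trans hX), sum_fin_ite_add_one_le
            (hρ.marginal_nonneg hX) ((hρ.marginal_le_singleton hx hX).trans (hk x hxE))]
      _ = ρ (insert x X) := by rw [marginal]; ring

end NoRhoABCMinor

end ExcludedMinor

theorem stmt16_general [DecidableEq α] (k : ℕ)
    (E : Finset α) (ρ : Finset α → ℤ)
    (hρ : IsPolymatroidOn E ρ) (hkp : ∀ x ∈ E, ρ {x} ≤ (k : ℤ))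
    (hnominor : ¬ ∃ (A B : Finset α) (x y : α) (a b c : ℤ),
      A ⊆ E ∧ B ⊆ E ∧ Disjoint A B ∧ E \ (A ∪ B) = {x, y} ∧ x ≠ y ∧
      0 ≤ a ∧ a < b ∧ b < c ∧ c ≤ (k : ℤ) ∧
      ρ ({x} ∪ B) - ρ B = b ∧ ρ ({y} ∪ B) - ρ B = c ∧
      ρ ({x, y} ∪ B) - ρ B = a + c) :
    MemQk k E ρ := by
  have hmin : NoRhoABCMinor k E ρ := hnominor
  refine ⟨fun s => layerRank ρ ((s : ℕ) + 1),
    fun s => hmin.isMatroidRankOn_layerRank hρ hkp _,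
    fun X hX => (hmin.sum_layerRank hρ hkp hX).symm,
    fun s _ => isQuotientOn_of_sub_le (hmin.isMatroidRankOn_layerRank hρ hkp _)
      (hmin.isMatroidRankOn_layerRank hρ hkp _).1
      fun X Y hXY hYE => hmin.layerRank_sub_le hρ hkp (by simp) hXY hYE⟩

theorem stmt16 [DecidableEq α] (k : ℕ) (hk : 2 ≤ k)
    (E : Finset α) (ρ : Finset α → ℤ)
    (hρ : IsPolymatroidOn E ρ) (hkp : ∀ x ∈ E, ρ {x} ≤ (k : ℤ))
    (hnominor : ¬ ∃ (A B : Finset α) (x y : α) (a b c : ℤ),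
      A ⊆ E ∧ B ⊆ E ∧ Disjoint A B ∧ E \ (A ∪ B) = {x, y} ∧ x ≠ y ∧
      0 ≤ a ∧ a < b ∧ b < c ∧ c ≤ (k : ℤ) ∧
      ρ ({x} ∪ B) - ρ B = b ∧ ρ ({y} ∪ B) - ρ B = c ∧
      ρ ({x, y} ∪ B) - ρ B = a + c) :
    MemQk k E ρ :=
  stmt16_general k E ρ hρ hkp hnominor
end

section
/- Let t be a positive integer, let M_1 and M_2 be matroids on a finite set E with M_2 a quotient of M_1, and let ρ be the 2-polymatroid on E with ρ(X) = r_{M_1}(X) + r_{M_2}(X) for all X ⊆ E. Then r_{M_1}(E) − r_{M_2}(E) ≤ t if and only if ρ has no minor isomorphic to the free matroid U_{t+1,t+1}, i.e., no minor ρ′ of ρ on a ground set F with |F| = t+1 satisfying ρ′(X) = |X| for all X ⊆ F. -/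
variable {α : Type*}

/-!
Because `M₂` is a quotient of `M₁`, the difference `r₁ - r₂` is monotone. If `(ρ∖A)/B` is free
on `F`, then each `e ∈ F` raises `ρ` over `B` by exactly one, and since the `r₂`-step is at most
the `r₁`-step, it is `r₁` that grows: `F` lies in the `M₂`-closure of `B` while `r₁` grows by
`|F|` from `B` to `F ∪ B`. So `r₁ - r₂` rises by `|F|` between `B` and `F ∪ B`, and
`|F| ≤ r₁(E) - r₂(E)`. Conversely, if `r₁(E) - r₂(E) > t`, take a basis `B` of `M₂` and extend
it in `M₁` by `t + 1` elements `F` that are independent over `B`; since `B` spans `M₂`, contracting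
`B` and deleting everything outside `F ∪ B` leaves the free matroid on `F`.
-/

section RankFunctions

variable [DecidableEq α] {E : Finset α} {r : Finset α → ℤ}

namespace IsPolymatroidOn

lemma nonneg (h : IsPolymatroidOn E r) {X : Finset α} (hX : X ⊆ E) : 0 ≤ r X :=
  h.1 ▸ h.2.1 ∅ X (Finset.empty_subset X) hX

lemma union_eq_of_forall_insert_eq (h : IsPolymatroidOn E r) {B : Finset α} (hB : B ⊆ E)
    {F : Finset α} (hF : F ⊆ E) (hcl : ∀ e ∈ F, r (insert e B) = r B) : r (B ∪ F) = r B := by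
  induction F using Finset.induction_on with
  | empty => simp
  | @insert a s _ ih =>
    have hsE : s ⊆ E := (Finset.subset_insert a s).trans hF
    have haE : a ∈ E := hF (Finset.mem_insert_self a s)
    have hBs : r (B ∪ s) = r B := ih hsE fun e he => hcl e (Finset.mem_insert_of_mem he)
    have hsub := h.2.2 (B ∪ s) (insert a B) (Finset.union_subset hB hsE)
      (Finset.insert_subset haE hB)
    have hunion : B ∪ s ∪ insert a B = B ∪ insert a s := by
      rw [Finset.union_insert, Finset.union_insert, Finset.union_right_comm, Finset.union_self]
    have hinter : r B ≤ r ((B ∪ s) ∩ insert a B) :=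
      h.2.1 _ _ (Finset.subset_inter Finset.subset_union_left (Finset.subset_insert a B))
        (Finset.inter_subset_left.trans (Finset.union_subset hB hsE))
    have hge : r B ≤ r (B ∪ insert a s) :=
      h.2.1 B _ Finset.subset_union_left (Finset.union_subset hB hF)
    rw [hunion] at hsub
    linarith [hcl a (Finset.mem_insert_self a s)]

end IsPolymatroidOn

namespace IsMatroidRankOn

lemma rank_insert_le (h : IsMatroidRankOn E r) {X : Finset α} (hX : X ⊆ E) {e : α} (he : e ∈ E) :
    r (insert e X) ≤ r X + 1 := by
  have hsub := h.1.2.2 X {e} hX (Finset.singleton_subset_iff.2 he)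
  have hinter : 0 ≤ r (X ∩ {e}) := h.1.nonneg (Finset.inter_subset_left.trans hX)
  rw [Finset.union_singleton] at hsub
  linarith [h.2 e he]

lemma rank_union_le_add_card (h : IsMatroidRankOn E r) {S : Finset α} (hS : S ⊆ E)
    {T : Finset α} (hT : T ⊆ E) : r (S ∪ T) ≤ r S + T.card := by
  induction T using Finset.induction_on with
  | empty => simp
  | @insert a s ha ih =>
    have hsE : s ⊆ E := (Finset.subset_insert a s).trans hT
    rw [Finset.union_insert, Finset.card_insert_of_notMem ha]
    have := h.rank_insert_le (Finset.union_subset hS hsE) (hT (Finset.mem_insert_self a s))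
    push_cast
    linarith [ih hsE]

lemma exists_rank_insert_eq_add_one (h : IsMatroidRankOn E r) {X : Finset α} (hX : X ⊆ E)
    (hlt : r X < r E) : ∃ e ∈ E, e ∉ X ∧ r (insert e X) = r X + 1 := by
  by_contra! hcon
  have hcl : ∀ e ∈ E, r (insert e X) = r X := by
    intro e he
    by_cases heX : e ∈ X
    · rw [Finset.insert_eq_self.2 heX]
    · have hge : r X ≤ r (insert e X) :=
        h.1.2.1 X _ (Finset.subset_insert e X) (Finset.insert_subset he hX)
      have := h.rank_insert_le hX he
      have := hcon e he heX
      omega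
  have hspan := h.1.union_eq_of_forall_insert_eq hX Finset.Subset.rfl hcl
  rw [Finset.union_eq_right.2 hX] at hspan
  omega

lemma exists_disjoint_rank_union_eq (h : IsMatroidRankOn E r) {B : Finset α} (hB : B ⊆ E)
    (m : ℕ) (hm : r B + m ≤ r E) :
    ∃ F ⊆ E, Disjoint F B ∧ F.card = m ∧ r (F ∪ B) = r B + m := by
  induction m with
  | zero => exact ⟨∅, Finset.empty_subset E, Finset.disjoint_empty_left B, rfl, by simp⟩
  | succ n ih =>
    obtain ⟨F, hFE, hFB, hcard, hrank⟩ := ih (by push_cast at hm; linarith)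
    obtain ⟨e, heE, he, hre⟩ :=
      h.exists_rank_insert_eq_add_one (Finset.union_subset hFE hB) (by push_cast at hm; omega)
    rw [Finset.mem_union, not_or] at he
    refine ⟨insert e F, Finset.insert_subset heE hFE, Finset.disjoint_insert_left.2 ⟨he.2, hFB⟩,
      by rw [Finset.card_insert_of_notMem he.1, hcard], ?_⟩
    rw [Finset.insert_union, hre, hrank]
    push_cast
    ring

lemma rank_union_eq_add_card_of_subset (h : IsMatroidRankOn E r) {B F : Finset α} (hB : B ⊆ E)
    (hF : F ⊆ E) (hfree : r (F ∪ B) = r B + F.card) {X : Finset α} (hX : X ⊆ F) :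
    r (X ∪ B) = r B + X.card := by
  have hXE : X ⊆ E := hX.trans hF
  have hup : r (X ∪ B) ≤ r B + X.card := Finset.union_comm X B ▸ h.rank_union_le_add_card hB hXE
  have hlo := h.rank_union_le_add_card (Finset.union_subset hXE hB)
    (T := F \ X) (Finset.sdiff_subset.trans hF)
  rw [Finset.union_right_comm, Finset.union_sdiff_of_subset hX, hfree,
    Finset.card_sdiff_of_subset hX, Nat.cast_sub (Finset.card_le_card hX)] at hlo
  linarith

end IsMatroidRankOn

end RankFunctions

namespace IsQuotientOn

variable [DecidableEq α] {E : Finset α} {r1 r2 : Finset α → ℤ}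

lemma rank_sub_le_rank_sub (hq : IsQuotientOn E r2 r1) {X Y : Finset α} (hXY : X ⊆ Y)
    (hY : Y ⊆ E) : r2 Y - r2 X ≤ r1 Y - r1 X := by
  obtain ⟨F, rN, hdisj, hN, hL, hQ⟩ := hq
  set f : α ↪ α ⊕ ℕ := ⟨Sum.inl, Sum.inl_injective⟩
  have hXE : X ⊆ E := hXY.trans hY
  rw [hL X hXE, hL Y hY, hQ X hXE, hQ Y hY]
  have hYm : Y.map f ⊆ E.map f := Finset.map_subset_map.2 hY
  have hXY' : X.map f ⊆ Y.map f := Finset.map_subset_map.2 hXY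
  have hsub := hN.1.2.2 (Y.map f) (X.map f ∪ F) (hYm.trans Finset.subset_union_left)
    (Finset.union_subset_union (hXY'.trans hYm) Finset.Subset.rfl)
  have hunion : Y.map f ∪ (X.map f ∪ F) = Y.map f ∪ F := by
    rw [← Finset.union_assoc, Finset.union_eq_left.2 hXY']
  have hinter : Y.map f ∩ (X.map f ∪ F) = X.map f := by
    rw [Finset.inter_union_distrib_left, Finset.inter_eq_right.2 hXY',
      Finset.disjoint_iff_inter_eq_empty.1 (hdisj.mono_left hYm), Finset.union_empty]
  rw [hunion, hinter] at hsub
  linarith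

lemma card_le_rank_sub_of_free_contraction (h1 : IsPolymatroidOn E r1)
    (h2 : IsPolymatroidOn E r2) (hq : IsQuotientOn E r2 r1) {B F : Finset α} (hB : B ⊆ E)
    (hF : F ⊆ E) (hfree : ∀ X ⊆ F, (r1 (X ∪ B) + r2 (X ∪ B)) - (r1 B + r2 B) = X.card) :
    (F.card : ℤ) ≤ r1 E - r2 E := by
  have hspan : r2 (F ∪ B) = r2 B := by
    rw [Finset.union_comm]
    refine h2.union_eq_of_forall_insert_eq hB hF fun e he => ?_
    have hstep := hfree {e} (Finset.singleton_subset_iff.2 he)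
    have hiB : insert e B ⊆ E := Finset.insert_subset (hF he) hB
    have := hq.rank_sub_le_rank_sub (Finset.subset_insert e B) hiB
    have := h2.2.1 B _ (Finset.subset_insert e B) hiB
    rw [← Finset.insert_eq, Finset.card_singleton] at hstep
    omega
  have hFB := hfree F Finset.Subset.rfl
  have htop := hq.rank_sub_le_rank_sub (Finset.union_subset hF hB) Finset.Subset.rfl
  have hbot := hq.rank_sub_le_rank_sub (Finset.empty_subset B) hB
  rw [h1.1, h2.1] at hbot
  linarith

end IsQuotientOn

lemma exists_free_contraction [DecidableEq α] {E : Finset α} {r1 r2 : Finset α → ℤ}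
    (h1 : IsMatroidRankOn E r1) (h2 : IsMatroidRankOn E r2) {m : ℕ}
    (hm : (m : ℤ) ≤ r1 E - r2 E) :
    ∃ B F : Finset α, B ⊆ E ∧ F ⊆ E ∧ Disjoint F B ∧ F.card = m ∧
      ∀ X ⊆ F, r1 (X ∪ B) = r1 B + X.card ∧ r2 (X ∪ B) = r2 B := by
  have hr2E : (((r2 E).toNat : ℕ) : ℤ) = r2 E :=
    Int.toNat_of_nonneg (h2.1.nonneg Finset.Subset.rfl)
  obtain ⟨B, hBE, -, hBcard, hBr⟩ :=
    h2.exists_disjoint_rank_union_eq (Finset.empty_subset E) (r2 E).toNat (by simp [h2.1.1, hr2E])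
  rw [Finset.union_empty, h2.1.1, zero_add, hr2E] at hBr
  have hr1B : r1 B ≤ B.card := by
    simpa [h1.1.1] using h1.rank_union_le_add_card (Finset.empty_subset E) hBE
  rw [hBcard, hr2E] at hr1B
  obtain ⟨F, hFE, hFB, hFcard, hFr⟩ := h1.exists_disjoint_rank_union_eq hBE m (by omega)
  refine ⟨B, F, hBE, hFE, hFB, hFcard, fun X hX => ⟨?_, ?_⟩⟩
  · exact h1.rank_union_eq_add_card_of_subset hBE hFE (hFcard ▸ hFr) hX
  · have hXB : X ∪ B ⊆ E := Finset.union_subset (hX.trans hFE) hBE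
    have := h2.1.2.1 B _ Finset.subset_union_right hXB
    have := h2.1.2.1 _ E hXB Finset.Subset.rfl
    omega

lemma Finset.sdiff_sdiff_union_union_eq [DecidableEq α] {E B F : Finset α}
    (hF : F ⊆ E) (hFB : Disjoint F B) : E \ (E \ (F ∪ B) ∪ B) = F := by
  ext x
  have := @hF x
  have : x ∈ F → x ∉ B := fun hx => Finset.disjoint_left.1 hFB hx
  simp only [Finset.mem_sdiff, Finset.mem_union]
  tauto

theorem stmt18_general [DecidableEq α] (t : ℕ)
    (E : Finset α) (r1 r2 : Finset α → ℤ)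
    (h1 : IsMatroidRankOn E r1) (h2 : IsMatroidRankOn E r2)
    (hq : IsQuotientOn E r2 r1) :
    (r1 E - r2 E ≤ (t : ℤ)) ↔
    ¬ ∃ A B : Finset α, A ⊆ E ∧ B ⊆ E ∧ Disjoint A B ∧
      (E \ (A ∪ B)).card = t + 1 ∧
      ∀ X ⊆ E \ (A ∪ B),
        (r1 (X ∪ B) + r2 (X ∪ B)) - (r1 B + r2 B) = (X.card : ℤ) := by
  constructor
  · rintro hle ⟨A, B, -, hB, -, hcard, hfree⟩
    have := hq.card_le_rank_sub_of_free_contraction h1.1 h2.1 hB Finset.sdiff_subset hfree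
    push_cast [hcard] at this
    omega
  · intro hno
    by_contra! hgt
    obtain ⟨B, F, hB, hF, hFB, hcard, hfree⟩ :=
      exists_free_contraction h1 h2 (m := t + 1) (by push_cast; omega)
    refine hno ⟨E \ (F ∪ B), B, Finset.sdiff_subset, hB,
      Finset.sdiff_disjoint.mono_right Finset.subset_union_right, ?_, ?_⟩ <;>
      rw [Finset.sdiff_sdiff_union_union_eq hF hFB]
    · exact hcard
    · intro X hX
      rw [(hfree X hX).1, (hfree X hX).2]
      ring

theorem stmt18 [DecidableEq α] (t : ℕ) (ht : 0 < t)
    (E : Finset α) (r1 r2 : Finset α → ℤ)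
    (h1 : IsMatroidRankOn E r1) (h2 : IsMatroidRankOn E r2)
    (hq : IsQuotientOn E r2 r1) :
    (r1 E - r2 E ≤ (t : ℤ)) ↔
    ¬ ∃ A B : Finset α, A ⊆ E ∧ B ⊆ E ∧ Disjoint A B ∧
      (E \ (A ∪ B)).card = t + 1 ∧
      ∀ X ⊆ E \ (A ∪ B),
        (r1 (X ∪ B) + r2 (X ∪ B)) - (r1 B + r2 B) = (X.card : ℤ) :=
  stmt18_general t E r1 r2 h1 h2 hq
end

section
/- Fix an integer k ≥ 2 and let ρ be a polymatroid on a finite set E belonging to Q_k. Then there is exactly one k-tuple (M_1, …, M_k) of matroids on E such that ρ(X) = r_{M_1}(X)+⋯+r_{M_k}(X) for all X ⊆ E and M_{i+1} is a quotient of M_i for each i ∈ {1,…,k−1}; moreover its rank functions satisfy: r_{M_i}(∅) = 0 and, for X ⊊ E and y ∈ E−X, r_{M_i}(X∪{y}) = r_{M_i}(X)+1 if ρ(X∪{y}) ≥ ρ(X)+i, and r_{M_i}(X∪{y}) = r_{M_i}(X) otherwise. -/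
variable {α : Type*}

open Finset

/-! When `y ∉ X` is added to `X`, the increments `dᵢ = r_{Mᵢ}(X ∪ {y}) - r_{Mᵢ}(X)` are `0` or `1`,
they decrease along the chain (a quotient `N / F` of `N ∖ F` gains at most what `N ∖ F` gains, by
submodularity of `N`), and they add up to `ρ(X ∪ {y}) - ρ(X)`. Hence `dᵢ = 1` exactly for the
first `ρ(X ∪ {y}) - ρ(X)` indices, and starting from `r_{Mᵢ}(∅) = 0` this recursion determines
every `Mᵢ`. -/

open Finset

def IsQuotientChainDecomposition [DecidableEq α] {k : ℕ} (E : Finset α) (ρ : Finset α → ℤ)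
    (M : Fin k → Finset α → ℤ) : Prop :=
  (∀ s, IsMatroidRankOn E (M s)) ∧ (∀ X ⊆ E, ρ X = ∑ s, M s X) ∧
    ∀ (s : Fin k) (h : (s : ℕ) + 1 < k), IsQuotientOn E (M ⟨(s : ℕ) + 1, h⟩) (M s)

theorem IsMatroidRankOn.insert_sub_eq_zero_or_one {β : Type*} [DecidableEq β] {E : Finset β}
    {r : Finset β → ℤ} (h : IsMatroidRankOn E r) {X : Finset β} {y : β} (hX : X ⊆ E)
    (hy : y ∈ E) (hyX : y ∉ X) : r (insert y X) - r X = 0 ∨ r (insert y X) - r X = 1 := by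
  obtain ⟨⟨h_empty, h_mono, h_submod⟩, h_single⟩ := h
  have h_le := h_mono X (insert y X) (subset_insert y X) (insert_subset hy hX)
  have h_sub := h_submod X {y} hX (singleton_subset_iff.2 hy)
  rw [union_singleton, inter_singleton_of_notMem hyX, h_empty] at h_sub
  have := h_single y hy
  omega

theorem IsQuotientOn.insert_sub_le [DecidableEq α] {E : Finset α} {rQ rL : Finset α → ℤ}
    (h : IsQuotientOn E rQ rL) {X : Finset α} {y : α} (hX : X ⊆ E) (hy : y ∈ E) :
    rQ (insert y X) - rQ X ≤ rL (insert y X) - rL X := by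
  obtain ⟨F, rN, h_disj, ⟨⟨-, -, h_submod⟩, -⟩, hL, hQ⟩ := h
  set ι : α ↪ α ⊕ ℕ := ⟨Sum.inl, Sum.inl_injective⟩
  have hyX : insert y X ⊆ E := insert_subset hy hX
  have h_map : X.map ι ⊆ (insert y X).map ι := map_subset_map.2 (subset_insert y X)
  have h_mapE : (insert y X).map ι ⊆ E.map ι := map_subset_map.2 hyX
  -- submodularity of `N` on `X ∪ {y}` and `X ∪ F`: their union is `(X ∪ {y}) ∪ F`, their meet `X`
  have h_sub := h_submod ((insert y X).map ι) (X.map ι ∪ F)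
    (h_mapE.trans subset_union_left)
    (union_subset ((map_subset_map.2 hX).trans subset_union_left) subset_union_right)
  rw [← union_assoc, union_eq_left.2 h_map, inter_union_distrib_left, inter_eq_right.2 h_map,
    disjoint_iff_inter_eq_empty.1 (h_disj.mono_left h_mapE), union_empty] at h_sub
  rw [hL X hX, hL _ hyX, hQ X hX, hQ _ hyX]
  linarith

theorem Fin.antitone_of_forall_succ_le {k : ℕ} {d : Fin k → ℤ}
    (h : ∀ (s : Fin k) (hs : (s : ℕ) + 1 < k), d ⟨(s : ℕ) + 1, hs⟩ ≤ d s) : Antitone d := by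
  cases k with
  | zero => exact fun s => s.elim0
  | succ n => exact Fin.antitone_iff_succ_le.2 fun i => h i.castSucc (by simp)

theorem Fin.eq_ite_of_antitone_of_zero_or_one {k : ℕ} {d : Fin k → ℤ} (hd : Antitone d)
    (h01 : ∀ t, d t = 0 ∨ d t = 1) (s : Fin k) :
    d s = if (s : ℤ) + 1 ≤ ∑ t, d t then 1 else 0 := by
  rcases h01 s with hs | hs
  · have h_sum : ∑ t, d t ≤ ∑ t, if t < s then (1 : ℤ) else 0 := by
      refine sum_le_sum fun t _ => ?_
      split_ifs with hts
      · rcases h01 t with h | h <;> omega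
      · linarith [hd (not_lt.1 hts)]
    rw [sum_boole, filter_gt_eq_Iio, Fin.card_Iio] at h_sum
    rw [hs, if_neg (by omega)]
  · have h_sum : ∑ t, (if t ≤ s then (1 : ℤ) else 0) ≤ ∑ t, d t := by
      refine sum_le_sum fun t _ => ?_
      split_ifs with hts
      · linarith [hd hts]
      · rcases h01 t with h | h <;> omega
    rw [sum_boole, filter_ge_eq_Iic, Fin.card_Iic] at h_sum
    push_cast at h_sum
    rw [hs, if_pos h_sum]

theorem IsQuotientChainDecomposition.insert_eq_ite [DecidableEq α] {k : ℕ} {E : Finset α}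
    {ρ : Finset α → ℤ} {M : Fin k → Finset α → ℤ} (hM : IsQuotientChainDecomposition E ρ M)
    {X : Finset α} {y : α} (hX : X ⊆ E) (hy : y ∈ E) (hyX : y ∉ X) (s : Fin k) :
    M s (insert y X) =
      if ρ X + ((s : ℕ) : ℤ) + 1 ≤ ρ (insert y X) then M s X + 1 else M s X := by
  obtain ⟨h_rank, h_sum, h_quot⟩ := hM
  set d : Fin k → ℤ := fun t => M t (insert y X) - M t X
  have h_total : ∑ t, d t = ρ (insert y X) - ρ X := by
    rw [sum_sub_distrib, h_sum X hX, h_sum _ (insert_subset hy hX)]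
  have h_ds := Fin.eq_ite_of_antitone_of_zero_or_one
    (Fin.antitone_of_forall_succ_le fun t ht => (h_quot t ht).insert_sub_le hX hy)
    (fun t => (h_rank t).insert_sub_eq_zero_or_one hX hy hyX) s
  rw [h_total] at h_ds
  split_ifs at h_ds ⊢ <;> omega

theorem eqOn_subsets_of_insert_sub_eq {β : Type*} [DecidableEq β] {E : Finset β}
    {f g : Finset β → ℤ} (h_empty : f ∅ = g ∅)
    (h_insert : ∀ X ⊆ E, ∀ y ∈ E, y ∉ X → f (insert y X) - f X = g (insert y X) - g X) :
    ∀ X ⊆ E, f X = g X := by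
  intro X
  induction X using Finset.induction_on with
  | empty => exact fun _ => h_empty
  | insert y X hyX ih =>
    intro hX
    have hX' := (subset_insert y X).trans hX
    have := h_insert X hX' y (hX (mem_insert_self y X)) hyX
    rw [ih hX'] at this
    omega

theorem stmt19_general [DecidableEq α] (k : ℕ)
    (E : Finset α) (ρ : Finset α → ℤ)
    (hQ : MemQk k E ρ) :
    (∃ M : Fin k → Finset α → ℤ,
      (∀ s, IsMatroidRankOn E (M s)) ∧
      (∀ X ⊆ E, ρ X = ∑ s, M s X) ∧
      (∀ (s : Fin k) (h : (s : ℕ) + 1 < k),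
        IsQuotientOn E (M ⟨(s : ℕ) + 1, h⟩) (M s)) ∧
      (∀ s, M s ∅ = 0) ∧
      (∀ s : Fin k, ∀ X ⊆ E, ∀ y ∈ E, y ∉ X →
        M s (insert y X) =
          if ρ X + ((s : ℕ) : ℤ) + 1 ≤ ρ (insert y X) then M s X + 1 else M s X)) ∧
    (∀ M M' : Fin k → Finset α → ℤ,
      ((∀ s, IsMatroidRankOn E (M s)) ∧ (∀ X ⊆ E, ρ X = ∑ s, M s X) ∧
        ∀ (s : Fin k) (h : (s : ℕ) + 1 < k),
          IsQuotientOn E (M ⟨(s : ℕ) + 1, h⟩) (M s)) →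
      ((∀ s, IsMatroidRankOn E (M' s)) ∧ (∀ X ⊆ E, ρ X = ∑ s, M' s X) ∧
        ∀ (s : Fin k) (h : (s : ℕ) + 1 < k),
          IsQuotientOn E (M' ⟨(s : ℕ) + 1, h⟩) (M' s)) →
      ∀ s : Fin k, ∀ X ⊆ E, M s X = M' s X) := by
  refine ⟨?_, fun M M' hM hM' s => ?_⟩
  · obtain ⟨M, hM⟩ := hQ
    exact ⟨M, hM.1, hM.2.1, hM.2.2, fun s => (hM.1 s).1.1,
      fun s X hX y hy hyX => IsQuotientChainDecomposition.insert_eq_ite hM hX hy hyX s⟩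
  · refine eqOn_subsets_of_insert_sub_eq ((hM.1 s).1.1.trans (hM'.1 s).1.1.symm) ?_
    intro X hX y hy hyX
    rw [IsQuotientChainDecomposition.insert_eq_ite hM hX hy hyX s,
      IsQuotientChainDecomposition.insert_eq_ite hM' hX hy hyX s]
    split_ifs <;> ring

theorem stmt19 [DecidableEq α] (k : ℕ) (hk : 2 ≤ k)
    (E : Finset α) (ρ : Finset α → ℤ)
    (hρ : IsPolymatroidOn E ρ)
    (hQ : MemQk k E ρ) :
    (∃ M : Fin k → Finset α → ℤ,
      (∀ s, IsMatroidRankOn E (M s)) ∧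
      (∀ X ⊆ E, ρ X = ∑ s, M s X) ∧
      (∀ (s : Fin k) (h : (s : ℕ) + 1 < k),
        IsQuotientOn E (M ⟨(s : ℕ) + 1, h⟩) (M s)) ∧
      (∀ s, M s ∅ = 0) ∧
      (∀ s : Fin k, ∀ X ⊆ E, ∀ y ∈ E, y ∉ X →
        M s (insert y X) =
          if ρ X + ((s : ℕ) : ℤ) + 1 ≤ ρ (insert y X) then M s X + 1 else M s X)) ∧
    (∀ M M' : Fin k → Finset α → ℤ,
      ((∀ s, IsMatroidRankOn E (M s)) ∧ (∀ X ⊆ E, ρ X = ∑ s, M s X) ∧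
        ∀ (s : Fin k) (h : (s : ℕ) + 1 < k),
          IsQuotientOn E (M ⟨(s : ℕ) + 1, h⟩) (M s)) →
      ((∀ s, IsMatroidRankOn E (M' s)) ∧ (∀ X ⊆ E, ρ X = ∑ s, M' s X) ∧
        ∀ (s : Fin k) (h : (s : ℕ) + 1 < k),
          IsQuotientOn E (M' ⟨(s : ℕ) + 1, h⟩) (M' s)) →
      ∀ s : Fin k, ∀ X ⊆ E, M s X = M' s X) :=
  stmt19_general k E ρ hQ
end
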